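/- arXiv:2403.10430 — 2 statements merged into one kernel-verified Lean document; each statement's English description precedes it below -/
import Mathlib

section
/- For a prime p, the residue field of the ring of integers of the p-adic complex numbers ℂ_p is algebraically closed. -/
/-! Lift a nonconstant polynomial over the residue field to a polynomial over the ring of
integers whose leading coefficient is a unit. It has a root in the algebraically closed field,
and that root is integral: if `‖x‖ > 1`, the leading term strictly dominates all the others, so
by the ultrametric inequality the polynomial cannot vanish at `x`. -/

open IsUltrametricDist in
/-- The ring of integers `{x : C | ‖x‖ ≤ 1}` of a nonarchimedean normed field `C`. -/
def ringOfIntegersOf (C : Type*) [NormedField C] [IsUltrametricDist C] : Subring C where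
  carrier := {x : C | ‖x‖ ≤ 1}
  mul_mem' := fun {a b} ha hb => by
    simpa using mul_le_one₀ ha (norm_nonneg _) hb
  one_mem' := by simp
  add_mem' := fun {a b} ha hb => le_trans (norm_add_le_max a b) (max_le ha hb)
  zero_mem' := by simp
  neg_mem' := fun {a} ha => by simpa using ha

open IsUltrametricDist in
/-- The maximal ideal `{x : C | ‖x‖ < 1}` of the ring of integers. -/
def maxIdealOf (C : Type*) [NormedField C] [IsUltrametricDist C] :
    Ideal (ringOfIntegersOf C) where
  carrier := {x : ringOfIntegersOf C | ‖(x : C)‖ < 1}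
  add_mem' := fun {a b} ha hb =>
    lt_of_le_of_lt (norm_add_le_max (a : C) (b : C)) (max_lt ha hb)
  zero_mem' := by simp
  smul_mem' := fun c x hx => by
    have hc : ‖(c : C)‖ ≤ 1 := c.2
    calc ‖((c • x : ringOfIntegersOf C) : C)‖ = ‖(c : C)‖ * ‖(x : C)‖ := norm_mul _ _
    _ ≤ 1 * ‖(x : C)‖ := by
        exact mul_le_mul_of_nonneg_right hc (norm_nonneg _)
    _ < 1 := by simpa using hx

open Polynomial

namespace IsUltrametricDist

lemma norm_sum_lt_of_forall_lt {ι M : Type*} [SeminormedAddCommGroup M] [IsUltrametricDist M]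
    {s : Finset ι} {f : ι → M} {r : ℝ} (hr : 0 < r) (h : ∀ i ∈ s, ‖f i‖ < r) :
    ‖∑ i ∈ s, f i‖ < r := by
  rcases s.eq_empty_or_nonempty with rfl | hs
  · simpa using hr
  · exact (hs.norm_sum_le_sup'_norm f).trans_lt ((Finset.sup'_lt_iff hs).2 h)

lemma norm_le_one_of_isRoot {C : Type*} [NormedField C] [IsUltrametricDist C] {f : C[X]}
    (hf : f ≠ 0) (hcoeff : ∀ i, ‖f.coeff i‖ ≤ ‖f.leadingCoeff‖) {x : C} (hx : f.IsRoot x) :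
    ‖x‖ ≤ 1 := by
  by_contra! hx1
  have hlc : 0 < ‖f.leadingCoeff‖ := norm_pos_iff.2 (leadingCoeff_ne_zero.2 hf)
  have hlower_terms : ∀ i ∈ Finset.range f.natDegree,
      ‖f.coeff i * x ^ i‖ < ‖f.leadingCoeff * x ^ f.natDegree‖ := by
    intro i hi
    rw [norm_mul, norm_mul, norm_pow, norm_pow]
    exact mul_lt_mul' (hcoeff i) (pow_lt_pow_right₀ hx1 (Finset.mem_range.1 hi))
      (by positivity) hlc
  have hsplit : ∑ i ∈ Finset.range f.natDegree, f.coeff i * x ^ i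
      + f.leadingCoeff * x ^ f.natDegree = 0 := by
    rw [IsRoot, eval_eq_sum_range, Finset.sum_range_succ] at hx
    exact hx
  have hdom := norm_sum_lt_of_forall_lt
    (by rw [norm_mul, norm_pow]; exact mul_pos hlc (by positivity)) hlower_terms
  rw [eq_neg_of_add_eq_zero_right hsplit, norm_neg] at hdom
  exact hdom.false

end IsUltrametricDist

section RingOfIntegers

variable {C : Type*} [NormedField C] [IsUltrametricDist C]

lemma norm_eq_one_of_notMem_maxIdealOf {x : ringOfIntegersOf C} (hx : x ∉ maxIdealOf C) :
    ‖(x : C)‖ = 1 :=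
  le_antisymm x.2 (not_lt.1 hx)

lemma isUnit_of_notMem_maxIdealOf {x : ringOfIntegersOf C} (hx : x ∉ maxIdealOf C) :
    IsUnit x := by
  have hnorm := norm_eq_one_of_notMem_maxIdealOf hx
  have hx0 : (x : C) ≠ 0 := norm_ne_zero_iff.1 (by simp [hnorm])
  have hinv_mem : ‖(x : C)⁻¹‖ ≤ 1 := by rw [norm_inv, hnorm, inv_one]
  exact IsUnit.of_mul_eq_one (a := x) ⟨_, hinv_mem⟩ (Subtype.ext (mul_inv_cancel₀ hx0))

variable (C) in
theorem maxIdealOf_isMaximal : (maxIdealOf C).IsMaximal := by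
  have one_notMem : (1 : ringOfIntegersOf C) ∉ maxIdealOf C := fun h =>
    (show ‖((1 : ringOfIntegersOf C) : C)‖ < 1 from h).ne (by simp)
  refine Ideal.isMaximal_iff.2 ⟨one_notMem, fun J x _ hxm hxJ => ?_⟩
  obtain ⟨u, rfl⟩ := isUnit_of_notMem_maxIdealOf hxm
  simpa using J.mul_mem_left (↑u⁻¹) hxJ

theorem exists_isRoot_of_notMem_maxIdealOf [IsAlgClosed C] {g : (ringOfIntegersOf C)[X]}
    (hlc : g.leadingCoeff ∉ maxIdealOf C) (hdeg : 0 < g.degree) : ∃ x, g.IsRoot x := by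
  set ι := (ringOfIntegersOf C).subtype
  have hι : Function.Injective ι := Subtype.coe_injective
  have hdeg_map : 0 < (g.map ι).degree := by rwa [degree_map_eq_of_injective hι]
  obtain ⟨x, hx⟩ := IsAlgClosed.exists_root (g.map ι) hdeg_map.ne'
  have hcoeff : ∀ i, ‖(g.map ι).coeff i‖ ≤ ‖(g.map ι).leadingCoeff‖ := fun i => by
    rw [coeff_map, leadingCoeff_map_of_injective hι]
    exact (g.coeff i).2.trans (norm_eq_one_of_notMem_maxIdealOf hlc).ge
  have hx1 := IsUltrametricDist.norm_le_one_of_isRoot (ne_zero_of_degree_gt hdeg_map) hcoeff hx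
  exact ⟨⟨x, hx1⟩, IsRoot.of_map hx hι⟩

end RingOfIntegers

theorem residueField_of_Cp_algebraically_closed_general
    (C : Type*) [NormedField C] [IsUltrametricDist C] [IsAlgClosed C] :
    (maxIdealOf C).IsMaximal ∧
      ∀ f : Polynomial (ringOfIntegersOf C ⧸ maxIdealOf C), 0 < f.degree →
        ∃ x, Polynomial.eval x f = 0 := by
  refine ⟨maxIdealOf_isMaximal C, fun f hf => ?_⟩
  obtain ⟨g, hg_map, hg_deg⟩ :=
    exists_degree_eq_of_mem_lifts (mem_lifts_of_surjective Ideal.Quotient.mk_surjective f)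
  have hlc : Ideal.Quotient.mk _ g.leadingCoeff = f.leadingCoeff := by
    rw [leadingCoeff, ← coeff_map, hg_map, natDegree_eq_of_degree_eq hg_deg, leadingCoeff]
  have hlc_notMem : g.leadingCoeff ∉ maxIdealOf C := by
    rw [← Ideal.Quotient.eq_zero_iff_mem, hlc]
    exact leadingCoeff_ne_zero.2 (ne_zero_of_degree_gt hf)
  obtain ⟨x, hx⟩ := exists_isRoot_of_notMem_maxIdealOf hlc_notMem (hg_deg ▸ hf)
  exact ⟨_, hg_map ▸ hx.map⟩

/-- For a prime `p`, the residue field of the ring of integers of the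
`p`-adic complex numbers `ℂ_p` is algebraically closed.  Here `ℂ_p` is characterized as
a complete algebraically closed nonarchimedean valued field `C` containing `ℚ_p`
isometrically, in which the elements algebraic over `ℚ_p` are dense. -/
theorem residueField_of_Cp_algebraically_closed
    (p : ℕ) [Fact p.Prime]
    (C : Type*) [NormedField C] [CompleteSpace C] [IsUltrametricDist C] [IsAlgClosed C]
    [Algebra ℚ_[p] C]
    (hisom : ∀ x : ℚ_[p], ‖algebraMap ℚ_[p] C x‖ = ‖x‖)
    (hdense : Dense {x : C | IsAlgebraic ℚ_[p] x}) :
    (maxIdealOf C).IsMaximal ∧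
      ∀ f : Polynomial (ringOfIntegersOf C ⧸ maxIdealOf C), 0 < f.degree →
        ∃ x, Polynomial.eval x f = 0 :=
  residueField_of_Cp_algebraically_closed_general C
end

section
/- Let O be a ring complete and separated for the p-adic topology such that Frobenius is surjective on O/pO. Then the natural map lim_{x↦x^p} O → lim_{x↦x^p} O/pO of multiplicative monoids (inverse limits along x ↦ x^p) is a bijection. -/
section Aux

variable {p : ℕ} [Fact p.Prime] {O : Type*} [CommRing O]

lemma aux_smul_top (n : ℕ) (x : O) :
    x ≡ 0 [SMOD ((Ideal.span {(p : O)}) ^ n • ⊤ : Submodule O O)] ↔ (p : O) ^ n ∣ x := by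
  rw [SModEq.sub_mem, sub_zero, smul_eq_mul, Ideal.mul_top, Ideal.span_singleton_pow,
    Ideal.mem_span_singleton]

lemma aux_mem_iff (n : ℕ) (x y : O) :
    x ≡ y [SMOD ((Ideal.span {(p : O)}) ^ n • ⊤ : Submodule O O)] ↔ (p : O) ^ n ∣ x - y := by
  rw [SModEq.sub_mem, smul_eq_mul, Ideal.mul_top, Ideal.span_singleton_pow,
    Ideal.mem_span_singleton]

/-- The key step: if `a ≡ b mod p^n` with `n ≥ 1`, then `a^p ≡ b^p mod p^(n+1)`. -/
lemma aux_pow_step {a b : O} {n : ℕ} (hn : 1 ≤ n) (h : (p : O) ^ n ∣ a - b) :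
    (p : O) ^ (n + 1) ∣ a ^ p - b ^ p := by
  have hpab : (p : O) ∣ a - b := dvd_trans (dvd_pow_self _ (Nat.one_le_iff_ne_zero.mp hn)) h
  have hsum : (p : O) ∣ ∑ i ∈ Finset.range p, a ^ i * b ^ (p - 1 - i) := by
    have h1 : (p : O) ∣ ∑ i ∈ Finset.range p, (a ^ i * b ^ (p - 1 - i) - b ^ (p - 1)) := by
      refine Finset.dvd_sum fun i hi => ?_
      have hib : b ^ i * b ^ (p - 1 - i) = b ^ (p - 1) := by
        rw [← pow_add]
        congr 1
        have := Finset.mem_range.mp hi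
        omega
      have : a ^ i * b ^ (p - 1 - i) - b ^ (p - 1) = (a ^ i - b ^ i) * b ^ (p - 1 - i) := by
        rw [sub_mul, hib]
      rw [this]
      exact Dvd.dvd.mul_right (dvd_trans hpab (sub_dvd_pow_sub_pow a b i)) _
    have h2 : ∑ i ∈ Finset.range p, (a ^ i * b ^ (p - 1 - i) - b ^ (p - 1)) =
        (∑ i ∈ Finset.range p, a ^ i * b ^ (p - 1 - i)) - (p : O) * b ^ (p - 1) := by
      rw [Finset.sum_sub_distrib, Finset.sum_const, Finset.card_range, nsmul_eq_mul]
    rw [h2] at h1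
    have := dvd_add h1 (Dvd.intro (b ^ (p - 1)) rfl)
    simpa using this
  have key : a ^ p - b ^ p = (∑ i ∈ Finset.range p, a ^ i * b ^ (p - 1 - i)) * (a - b) :=
    (geom_sum₂_mul a b p).symm
  rw [key, pow_succ, mul_comm ((p:O)^n)]
  exact mul_dvd_mul hsum h

/-- If `a ≡ b mod p`, then `a^(p^k) ≡ b^(p^k) mod p^(k+1)`. -/
lemma aux_pow_iter {a b : O} (h : (p : O) ∣ a - b) (k : ℕ) :
    (p : O) ^ (k + 1) ∣ a ^ p ^ k - b ^ p ^ k := by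
  induction k with
  | zero => simpa using h
  | succ k ih =>
      have := aux_pow_step (n := k + 1) (Nat.le_add_left 1 k) ih
      have heq : ∀ c : O, (c ^ p ^ k) ^ p = c ^ p ^ (k + 1) := fun c => by
        rw [← pow_mul, pow_succ]
      rwa [heq, heq] at this

lemma aux_seq_pow {f : ℕ → O} (hf : ∀ n, (f (n + 1)) ^ p = f n) (n k : ℕ) :
    f n = (f (n + k)) ^ p ^ k := by
  induction k generalizing n with
  | zero => simp
  | succ k ih =>
      rw [← hf n, ih (n + 1), ← pow_mul, ← pow_succ,
        show n + 1 + k = n + (k + 1) from by omega]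

end Aux

/-- Let `O` be a ring complete and separated for the `p`-adic topology such
that Frobenius is surjective on `O/pO`.  Then the natural map
`lim_{x↦x^p} O → lim_{x↦x^p} O/pO` of multiplicative monoids (inverse limits along
`x ↦ x^p`) is a bijection. -/
theorem limit_pth_power_bijective
    (p : ℕ) [Fact p.Prime] (O : Type*) [CommRing O]
    [IsAdicComplete (Ideal.span {(p : O)}) O]
    (hF : Function.Surjective fun x : O ⧸ Ideal.span {(p : O)} => x ^ p) :
    Function.Bijective
      (fun f : {f : ℕ → O // ∀ n, (f (n + 1)) ^ p = f n} =>
        (⟨fun n => Ideal.Quotient.mk (Ideal.span {(p : O)}) (f.1 n),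
            fun n => by rw [← map_pow, f.2 n]⟩ :
          {g : ℕ → O ⧸ Ideal.span {(p : O)} // ∀ n, (g (n + 1)) ^ p = g n})) := by
  set I := Ideal.span {(p : O)} with hI
  have hmod : ∀ x : O, Ideal.Quotient.mk I x = 0 ↔ (p : O) ∣ x := fun x => by
    rw [Ideal.Quotient.eq_zero_iff_mem, hI, Ideal.mem_span_singleton]
  have hmodeq : ∀ x y : O, Ideal.Quotient.mk I x = Ideal.Quotient.mk I y ↔ (p : O) ∣ x - y :=
    fun x y => by rw [Ideal.Quotient.eq, hI, Ideal.mem_span_singleton]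
  constructor
  · -- injectivity
    rintro ⟨f, hf⟩ ⟨g, hg⟩ h
    have h' : ∀ n, (p : O) ∣ f n - g n := by
      intro n
      have := congrFun (congrArg Subtype.val h) n
      exact (hmodeq _ _).mp this
    ext n
    show f n = g n
    refine sub_eq_zero.mp (IsHausdorff.haus (I := I) inferInstance (f n - g n) fun k => ?_)
    rw [aux_smul_top]
    rcases k with _ | k
    · simp
    · have h1 : f n = (f (n + (k + 1))) ^ p ^ (k + 1) := aux_seq_pow hf n (k + 1)
      have h2 : g n = (g (n + (k + 1))) ^ p ^ (k + 1) := aux_seq_pow hg n (k + 1)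
      rw [h1, h2]
      have := aux_pow_iter (h' (n + (k + 1))) (k + 1)
      exact dvd_trans (pow_dvd_pow _ (by omega)) this
  · -- surjectivity
    rintro ⟨g, hg⟩
    -- choose lifts
    choose h hh using fun n => Ideal.Quotient.mk_surjective (I := I) (g n)
    have hstep : ∀ n, (p : O) ∣ (h (n + 1)) ^ p - h n := by
      intro n
      rw [← hmodeq]
      rw [map_pow, hh (n + 1), hh n, hg n]
    -- for each n, the sequence k ↦ h (n + k) ^ p ^ k is Cauchy
    have hcons : ∀ m a : ℕ, (p : O) ^ (a + 1) ∣
        (h (m + (a + 1))) ^ p ^ (a + 1) - (h (m + a)) ^ p ^ a := by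
      intro m a
      have base : (p : O) ∣ (h (m + a + 1)) ^ p - h (m + a) := hstep _
      have := aux_pow_iter base a
      have heq : ((h (m + a + 1)) ^ p) ^ p ^ a = (h (m + (a + 1))) ^ p ^ (a + 1) := by
        rw [← pow_mul, ← pow_succ']
        congr 2
      rwa [heq] at this
    have hcauchy : ∀ n a c : ℕ,
        (p : O) ^ a ∣ (h (n + a)) ^ p ^ a - (h (n + (a + c))) ^ p ^ (a + c) := by
      intro n a c
      induction c with
      | zero => simp
      | succ c ih =>
          have hd2 : (p : O) ^ a ∣
              (h (n + (a + c))) ^ p ^ (a + c) - (h (n + (a + (c + 1)))) ^ p ^ (a + (c + 1)) := by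
            have := hcons n (a + c)
            rw [show a + c + 1 = a + (c + 1) from rfl] at this
            have h2 : (p : O) ^ a ∣
                (h (n + (a + (c + 1)))) ^ p ^ (a + (c + 1)) - (h (n + (a + c))) ^ p ^ (a + c) :=
              dvd_trans (pow_dvd_pow _ (by omega)) this
            exact (dvd_sub_comm).mp h2
          have := dvd_add ih hd2
          simpa using this
    -- take limits
    have hlim : ∀ n : ℕ, ∃ L : O, ∀ k,
        (h (n + k)) ^ p ^ k ≡ L [SMOD (I ^ k • ⊤ : Submodule O O)] := by
      intro n
      refine IsPrecomplete.prec (I := I) inferInstance ?_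
      intro a b hab
      rw [hI, aux_mem_iff]
      obtain ⟨c, rfl⟩ := Nat.exists_eq_add_of_le hab
      exact hcauchy n a c
    choose L hL using hlim
    have hLdvd : ∀ n k, (p : O) ^ k ∣ (h (n + k)) ^ p ^ k - L n := by
      intro n k
      have := hL n k
      rwa [hI, aux_mem_iff] at this
    refine ⟨⟨L, ?_⟩, ?_⟩
    · -- compatibility : (L (n+1))^p = L n
      intro n
      refine sub_eq_zero.mp ?_
      refine IsHausdorff.haus (I := I) inferInstance _ fun k => ?_
      rw [aux_smul_top]
      -- L (n+1) ≡ h (n+1+k) ^ p ^ k mod p^k, hence L(n+1)^p ≡ h(n+1+k)^p^(k+1) mod p^k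
      have h1 : (p : O) ^ k ∣ (L (n + 1)) ^ p - (h (n + 1 + k)) ^ p ^ (k + 1) := by
        have hd : (p : O) ^ k ∣ L (n + 1) - (h (n + 1 + k)) ^ p ^ k :=
          (dvd_sub_comm).mp (hLdvd (n + 1) k)
        have := dvd_trans hd (sub_dvd_pow_sub_pow (L (n + 1)) ((h (n + 1 + k)) ^ p ^ k) p)
        have heq : ((h (n + 1 + k)) ^ p ^ k) ^ p = (h (n + 1 + k)) ^ p ^ (k + 1) := by
          rw [← pow_mul, ← pow_succ]
        rwa [heq] at this
      have h2 : (p : O) ^ k ∣ (h (n + (k + 1))) ^ p ^ (k + 1) - L n :=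
        dvd_trans (pow_dvd_pow _ (by omega)) (hLdvd n (k + 1))
      have heq2 : n + 1 + k = n + (k + 1) := by omega
      rw [heq2] at h1
      have := dvd_add h1 h2
      simpa using this
    · -- reduction mod p recovers g
      refine Subtype.ext ?_
      funext n
      show Ideal.Quotient.mk I (L n) = g n
      have h1 : (p : O) ∣ L n - (h (n + 1)) ^ p := by
        have := hLdvd n 1
        simpa using (dvd_sub_comm).mp this
      have h2 : Ideal.Quotient.mk I (L n) = Ideal.Quotient.mk I ((h (n + 1)) ^ p) :=
        (hmodeq _ _).mpr h1
      rw [h2, map_pow, hh (n + 1), hg n]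
end
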